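/- Let E be a bounded subset of a metric space, H a real Hilbert space, K : E → H a map, N ≥ 2, and X = (x_1,…,x_N) ∈ E^N a design; set V = span{K(x_1),…,K(x_N)} with orthogonal projection P_V, fill distance h_X = sup_{y∈E} min_{1≤i≤N} dist(y, x_i), and power function P_X(y) = ‖K(y) − P_V(K(y))‖. Suppose G : ℝ_{≥0} → ℝ is nondecreasing and P_X(y) ≤ G(h_X) for all y ∈ E, and suppose X is a maximin design in the refined sense (δ_X ≥ δ_Y for all Y ∈ E^N, and every Y with δ_Y = δ_X has at least as many index pairs at the minimal distance as X). Then for every f ∈ H and every y ∈ E, |⟪K(y), f⟫ − ⟪K(y), P_V f⟫| ≤ ‖f‖ · G(δ_X). -/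
import Mathlib


open scoped RealInnerProductSpace

/-- The separation distance (maximin criterion value) of a design `x = (x_1, …, x_N)`:
`δ_X = min_{i ≠ j} dist(x_i, x_j)`, expressed as an infimum. -/
noncomputable def sepDist {α : Type*} [MetricSpace α] {N : ℕ} (x : Fin N → α) : ℝ :=
  sInf {r : ℝ | ∃ i j : Fin N, i ≠ j ∧ r = dist (x i) (x j)}

/-- The number of unordered index pairs `{i, j}` (`i ≠ j`) realizing the minimal distance. -/
noncomputable def minPairCount {α : Type*} [MetricSpace α] {N : ℕ} (x : Fin N → α) : ℕ :=
  {p : Fin N × Fin N | p.1 < p.2 ∧ dist (x p.1) (x p.2) = sepDist x}.ncard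

/-- The fill distance (minimax criterion value) of the design `x` over the domain `E`:
`h_X = sup_{y ∈ E} min_{1 ≤ i ≤ N} dist(y, x_i)`. -/
noncomputable def fillDist {α : Type*} [MetricSpace α] (E : Set α) {N : ℕ}
    (x : Fin N → α) : ℝ :=
  ⨆ y ∈ E, ⨅ i : Fin N, dist y (x i)

lemma sepDist_nonneg {α : Type*} [MetricSpace α] {N : ℕ} (x : Fin N → α) :
    0 ≤ sepDist x := by
  apply Real.sInf_nonneg
  rintro r ⟨i, j, -, rfl⟩
  exact dist_nonneg

lemma sepDist_le {α : Type*} [MetricSpace α] {N : ℕ} (x : Fin N → α) {i j : Fin N}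
    (h : i ≠ j) : sepDist x ≤ dist (x i) (x j) :=
  csInf_le ⟨0, by rintro r ⟨a, b, -, rfl⟩; exact dist_nonneg⟩ ⟨i, j, h, rfl⟩

lemma sepDist_set_eq {α : Type*} [MetricSpace α] {N : ℕ} (x : Fin N → α) :
    {r : ℝ | ∃ i j : Fin N, i ≠ j ∧ r = dist (x i) (x j)} =
      (fun p : Fin N × Fin N => dist (x p.1) (x p.2)) '' {p | p.1 ≠ p.2} := by
  ext r
  constructor
  · rintro ⟨i, j, h, rfl⟩; exact ⟨(i, j), h, rfl⟩
  · rintro ⟨⟨i, j⟩, h, rfl⟩; exact ⟨i, j, h, rfl⟩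

lemma sepDist_attained {α : Type*} [MetricSpace α] {N : ℕ} (hN : 2 ≤ N) (x : Fin N → α) :
    ∃ a b : Fin N, a ≠ b ∧ sepDist x = dist (x a) (x b) := by
  have h01 : (⟨0, by omega⟩ : Fin N) ≠ ⟨1, by omega⟩ := by
    intro h; simpa using congrArg Fin.val h
  have hne : {r : ℝ | ∃ i j : Fin N, i ≠ j ∧ r = dist (x i) (x j)}.Nonempty :=
    ⟨_, _, _, h01, rfl⟩
  have hfin : {r : ℝ | ∃ i j : Fin N, i ≠ j ∧ r = dist (x i) (x j)}.Finite := by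
    rw [sepDist_set_eq]; exact (Set.toFinite _).image _
  have := hne.csInf_mem hfin
  obtain ⟨a, b, hab, h⟩ := this
  exact ⟨a, b, hab, h⟩

lemma fillDist_le_sepDist {α : Type*} [MetricSpace α] (E : Set α) {N : ℕ} (hN : 2 ≤ N)
    (x : Fin N → α) (hx : ∀ i, x i ∈ E)
    (hmax : ∀ y : Fin N → α, (∀ i, y i ∈ E) → sepDist y ≤ sepDist x)
    (hrefined : ∀ y : Fin N → α, (∀ i, y i ∈ E) → sepDist y = sepDist x →
      minPairCount x ≤ minPairCount y) :
    fillDist E x ≤ sepDist x := by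
  have hδ0 : 0 ≤ sepDist x := sepDist_nonneg x
  apply Real.iSup_le _ hδ0
  intro y
  apply Real.iSup_le _ hδ0
  intro hy
  by_contra hlt
  push_neg at hlt
  have hbdd : BddBelow (Set.range fun i : Fin N => dist y (x i)) :=
    ⟨0, by rintro r ⟨i, rfl⟩; exact dist_nonneg⟩
  have hyd : ∀ k, sepDist x < dist y (x k) := fun k =>
    lt_of_lt_of_le hlt (ciInf_le hbdd k)
  obtain ⟨a, b, hab, hdab⟩ := sepDist_attained hN x
  set Y := Function.update x a y with hY
  have hYa : Y a = y := Function.update_self a y x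
  have hYk : ∀ k, k ≠ a → Y k = x k := fun k hk => Function.update_of_ne hk y x
  have hYE : ∀ k, Y k ∈ E := by
    intro k
    by_cases hk : k = a
    · rw [hk, hYa]; exact hy
    · rw [hYk k hk]; exact hx k
  have hYpair : ∀ i j : Fin N, i ≠ j → sepDist x ≤ dist (Y i) (Y j) := by
    intro i j hij
    by_cases hi : i = a
    · subst hi
      rw [hYa, hYk j (Ne.symm hij)]
      exact (hyd j).le
    · by_cases hj : j = a
      · subst hj
        rw [hYa, hYk i hi, dist_comm]
        exact (hyd i).le
      · rw [hYk i hi, hYk j hj]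
        exact sepDist_le x hij
  have hsepY : sepDist Y = sepDist x := by
    refine le_antisymm (hmax Y hYE) ?_
    apply le_csInf
    · have h01 : (⟨0, by omega⟩ : Fin N) ≠ ⟨1, by omega⟩ := by
        intro h; simpa using congrArg Fin.val h
      exact ⟨_, _, _, h01, rfl⟩
    · rintro r ⟨i, j, hij, rfl⟩
      exact hYpair i j hij
  -- the minimal pairs of Y form a strict subset of those of x
  have hne_a : ∀ p : Fin N × Fin N, p.1 < p.2 → dist (Y p.1) (Y p.2) = sepDist x →
      p.1 ≠ a ∧ p.2 ≠ a := by
    intro p hlt12 hd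
    constructor
    · intro h1
      have h2 : p.2 ≠ a := by intro h2; rw [h1, h2] at hlt12; exact lt_irrefl _ hlt12
      rw [h1, hYa, hYk p.2 h2] at hd
      exact absurd hd (hyd p.2).ne'
    · intro h2
      have h1 : p.1 ≠ a := by intro h1; rw [h1, h2] at hlt12; exact lt_irrefl _ hlt12
      rw [h2, hYa, hYk p.1 h1, dist_comm] at hd
      exact absurd hd (hyd p.1).ne'
  have hsub : {p : Fin N × Fin N | p.1 < p.2 ∧ dist (Y p.1) (Y p.2) = sepDist Y} ⊂
      {p : Fin N × Fin N | p.1 < p.2 ∧ dist (x p.1) (x p.2) = sepDist x} := by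
    constructor
    · rintro p ⟨h1, h2⟩
      rw [hsepY] at h2
      obtain ⟨ha1, ha2⟩ := hne_a p h1 h2
      rw [hYk p.1 ha1, hYk p.2 ha2] at h2
      exact ⟨h1, h2⟩
    · intro hsuper
      -- the pair {a, b} (ordered) belongs to the right set but not to the left one
      rcases lt_or_gt_of_ne hab with hlt' | hlt'
      · have hmem : (a, b) ∈ {p : Fin N × Fin N | p.1 < p.2 ∧
            dist (x p.1) (x p.2) = sepDist x} := ⟨hlt', hdab.symm⟩
        have := hsuper hmem
        obtain ⟨ha1, -⟩ := hne_a (a, b) this.1 (by rw [← hsepY]; exact this.2)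
        exact ha1 rfl
      · have hmem : (b, a) ∈ {p : Fin N × Fin N | p.1 < p.2 ∧
            dist (x p.1) (x p.2) = sepDist x} := ⟨hlt', by rw [dist_comm]; exact hdab.symm⟩
        have := hsuper hmem
        obtain ⟨-, ha2⟩ := hne_a (b, a) this.1 (by rw [← hsepY]; exact this.2)
        exact ha2 rfl
  have hcount : minPairCount Y < minPairCount x :=
    Set.ncard_lt_ncard hsub (Set.toFinite _)
  have := hrefined Y hYE hsepY
  omega

/-- If the power function of the design is bounded by `G(h_X)` for a nondecreasing `G`, and `X`
is a refined maximin design in `E`, then the pointwise kernel interpolation error is at most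
`‖f‖ · G(δ_X)` on all of `E`. Here the orthogonal projections onto
`V = span{K(x_1), …, K(x_N)}` are characterized by membership and orthogonality. -/
theorem stmt4 {α : Type*} [MetricSpace α] (E : Set α) (hE : Bornology.IsBounded E)
    {H : Type*} [NormedAddCommGroup H] [InnerProductSpace ℝ H] [CompleteSpace H]
    (K : α → H) (N : ℕ) (hN : 2 ≤ N) (x : Fin N → α) (hx : ∀ i, x i ∈ E)
    (G : ℝ → ℝ) (hG : MonotoneOn G (Set.Ici 0))
    (hpow : ∀ y ∈ E, ∀ p : H, p ∈ Submodule.span ℝ (Set.range fun i => K (x i)) →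
      (∀ v ∈ Submodule.span ℝ (Set.range fun i => K (x i)), ⟪K y - p, v⟫ = 0) →
      ‖K y - p‖ ≤ G (fillDist E x))
    (hmax : ∀ y : Fin N → α, (∀ i, y i ∈ E) → sepDist y ≤ sepDist x)
    (hrefined : ∀ y : Fin N → α, (∀ i, y i ∈ E) → sepDist y = sepDist x →
      minPairCount x ≤ minPairCount y) :
    ∀ f : H, ∀ y ∈ E, ∀ s p : H,
      s ∈ Submodule.span ℝ (Set.range fun i => K (x i)) →
      (∀ v ∈ Submodule.span ℝ (Set.range fun i => K (x i)), ⟪f - s, v⟫ = 0) →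
      p ∈ Submodule.span ℝ (Set.range fun i => K (x i)) →
      (∀ v ∈ Submodule.span ℝ (Set.range fun i => K (x i)), ⟪K y - p, v⟫ = 0) →
      |⟪K y, f⟫ - ⟪K y, s⟫| ≤ ‖f‖ * G (sepDist x) := by
  intro f y hy s p hsmem hsorth hpmem hporth
  -- fill distance is nonnegative
  have hfill0 : 0 ≤ fillDist E x := by
    apply Real.iSup_nonneg
    intro z
    apply Real.iSup_nonneg
    intro _
    apply Real.iInf_nonneg
    intro i
    exact dist_nonneg
  have hfill_le : fillDist E x ≤ sepDist x :=
    fillDist_le_sepDist E hN x hx hmax hrefined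
  have hGle : G (fillDist E x) ≤ G (sepDist x) :=
    hG hfill0 (le_trans hfill0 hfill_le) hfill_le
  -- power function bound
  have hP : ‖K y - p‖ ≤ G (fillDist E x) := hpow y hy p hpmem hporth
  -- rewrite the error as an inner product with K y - p
  have h1 : ⟪K y, f⟫ - ⟪K y, s⟫ = ⟪K y - p, f - s⟫ := by
    have h0 : ⟪p, f - s⟫ = 0 := by
      rw [real_inner_comm]; exact hsorth p hpmem
    rw [inner_sub_left, inner_sub_right, h0, sub_zero]
  -- ‖f - s‖ ≤ ‖f‖
  have hfs : ‖f - s‖ ≤ ‖f‖ := by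
    have horth : ⟪f - s, s⟫ = 0 := hsorth s hsmem
    have hsq : ‖f‖ ^ 2 = ‖f - s‖ ^ 2 + ‖s‖ ^ 2 := by
      have h := norm_add_sq_real (f - s) s
      rw [sub_add_cancel, horth] at h
      linarith [h]
    nlinarith [norm_nonneg (f - s), norm_nonneg f, norm_nonneg s]
  calc |⟪K y, f⟫ - ⟪K y, s⟫| = |⟪K y - p, f - s⟫| := by rw [h1]
    _ ≤ ‖K y - p‖ * ‖f - s‖ := abs_real_inner_le_norm _ _
    _ ≤ G (fillDist E x) * ‖f - s‖ := by
        apply mul_le_mul_of_nonneg_right hP (norm_nonneg _)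
    _ ≤ G (sepDist x) * ‖f‖ := by
        exact mul_le_mul hGle hfs (norm_nonneg _) (le_trans (le_trans (norm_nonneg _) hP) hGle)
    _ = ‖f‖ * G (sepDist x) := mul_comm _ _
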